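/- For p ∈ (1/2, 1) and D > 0, the bias amplification B(p, D) = 1 - p - (1-p)Φ(β + D/2) - p Φ(β - D/2), with β = -D⁻¹ log(p/(1-p)), is strictly positive. That is, a biased class prior induces strictly positive bias amplification in the Bayes-optimal Gaussian classifier. -/

import Mathlib

open Real MeasureTheory

/-- The standard normal CDF. -/
noncomputable def stdNormalCDF (x : ℝ) : ℝ :=
  ∫ t in Set.Iic x, (Real.sqrt (2 * Real.pi))⁻¹ * Real.exp (-t ^ 2 / 2)

/-- Bias amplification of the Bayes-optimal classifier. -/
noncomputable def biasAmp (p D : ℝ) : ℝ :=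
  1 - p - (1 - p) * stdNormalCDF (-D⁻¹ * Real.log (p / (1 - p)) + D / 2)
    - p * stdNormalCDF (-D⁻¹ * Real.log (p / (1 - p)) - D / 2)

open Filter Set

noncomputable def phiD (t : ℝ) : ℝ := (Real.sqrt (2 * Real.pi))⁻¹ * Real.exp (-t ^ 2 / 2)

lemma phiD_pos (t : ℝ) : 0 < phiD t := by
  apply mul_pos (inv_pos.2 (Real.sqrt_pos.2 (by positivity))) (Real.exp_pos _)

lemma phiD_cont : Continuous phiD := by
  unfold phiD; fun_prop

lemma phiD_eq (t : ℝ) : phiD t = (Real.sqrt (2 * Real.pi))⁻¹ * Real.exp (-(1/2) * t ^ 2) := by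
  unfold phiD; ring_nf

lemma integrable_phiD : Integrable phiD := by
  have := (integrable_exp_neg_mul_sq (by norm_num : (0:ℝ) < 1/2)).const_mul
    (Real.sqrt (2 * Real.pi))⁻¹
  exact this.congr (by filter_upwards with t; rw [phiD_eq])

lemma integral_phiD : ∫ t, phiD t = 1 := by
  have h := integral_gaussian (1/2 : ℝ)
  have h2 : Real.sqrt (Real.pi / (1/2)) = Real.sqrt (2 * Real.pi) := by
    congr 1; ring
  simp only [funext phiD_eq, h2] at *
  rw [MeasureTheory.integral_const_mul, h]
  rw [inv_mul_cancel₀ (by positivity)]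

noncomputable def QD (x : ℝ) : ℝ := ∫ t in Set.Ioi x, phiD t

lemma cdf_eq (x : ℝ) : stdNormalCDF x = ∫ t in Set.Iic x, phiD t := rfl

lemma cdf_add_QD (x : ℝ) : stdNormalCDF x + QD x = 1 := by
  rw [cdf_eq, QD, intervalIntegral.integral_Iic_add_Ioi integrable_phiD.integrableOn
    integrable_phiD.integrableOn, integral_phiD]

lemma QD_pos (x : ℝ) : 0 < QD x := by
  rw [QD, setIntegral_pos_iff_support_of_nonneg_ae]
  · have : Function.support phiD ∩ Set.Ioi x = Set.Ioi x := by
      rw [Set.inter_eq_right]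
      intro t _
      exact (phiD_pos t).ne'
    rw [this]
    simp
  · filter_upwards with t using (phiD_pos t).le
  · exact integrable_phiD.integrableOn

lemma cdf_symm (x : ℝ) : stdNormalCDF (-x) = QD x := by
  rw [cdf_eq, QD]
  have : ∀ t : ℝ, phiD t = phiD (-t) := by
    intro t; unfold phiD; ring_nf
  calc ∫ t in Set.Iic (-x), phiD t = ∫ t in Set.Iic (-x), phiD (-t) := by
        simp_rw [← this]
      _ = ∫ t in Set.Ioi x, phiD t := by rw [integral_comp_neg_Iic, neg_neg]

lemma hasDerivAt_cdf (x : ℝ) : HasDerivAt stdNormalCDF (phiD x) x := by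
  have key : ∀ y, stdNormalCDF y = stdNormalCDF 0 + ∫ t in (0:ℝ)..y, phiD t := by
    intro y
    rw [cdf_eq, cdf_eq, ← intervalIntegral.integral_Iic_sub_Iic integrable_phiD.integrableOn
      integrable_phiD.integrableOn]
    ring
  have hd : HasDerivAt (fun y => ∫ t in (0:ℝ)..y, phiD t) (phiD x) x := by
    apply intervalIntegral.integral_hasDerivAt_right
      (phiD_cont.intervalIntegrable _ _)
      (phiD_cont.stronglyMeasurableAtFilter _ _)
      phiD_cont.continuousAt
  have := hd.const_add (stdNormalCDF 0)
  exact this.congr_of_eventuallyEq (by filter_upwards with y using (key y))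

lemma hasDerivAt_QD (x : ℝ) : HasDerivAt QD (-phiD x) x := by
  have : ∀ y, QD y = 1 - stdNormalCDF y := by
    intro y; have := cdf_add_QD y; linarith
  have hd := (hasDerivAt_cdf x).const_sub 1
  exact hd.congr_of_eventuallyEq (by filter_upwards with y using (this y))

lemma hasDerivAt_negphiD (t : ℝ) : HasDerivAt (fun s => -phiD s) (t * phiD t) t := by
  have h1 : HasDerivAt (fun s : ℝ => -s ^ 2 / 2) (-t) t := by
    have := ((hasDerivAt_pow 2 t).neg.div_const 2)
    refine this.congr_deriv ?_
    simp; ring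
  have h2 := (h1.exp.const_mul (Real.sqrt (2 * Real.pi))⁻¹).neg
  refine h2.congr_deriv ?_
  unfold phiD; ring

lemma integrable_id_mul_phiD : Integrable (fun t => t * phiD t) := by
  have := ((integrable_mul_exp_neg_mul_sq (by norm_num : (0:ℝ) < 1/2)).const_mul
    (Real.sqrt (2 * Real.pi))⁻¹)
  exact this.congr (by filter_upwards with t; rw [phiD_eq]; ring)

lemma tendsto_phiD : Tendsto phiD atTop (nhds 0) := by
  have h1 : Tendsto (fun t : ℝ => -t ^ 2 / 2) atTop atBot := by
    apply Tendsto.atBot_div_const (by norm_num)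
    exact tendsto_neg_atBot_iff.mpr (tendsto_pow_atTop (by norm_num))
  have h2 := Real.tendsto_exp_atBot.comp h1
  have h3 := h2.const_mul (Real.sqrt (2 * Real.pi))⁻¹
  rw [mul_zero] at h3
  exact h3

lemma integral_tail (x : ℝ) : ∫ t in Set.Ioi x, t * phiD t = phiD x := by
  have := MeasureTheory.integral_Ioi_of_hasDerivAt_of_tendsto
    (f := fun s => -phiD s) (f' := fun t => t * phiD t) (a := x) (m := 0)
    (phiD_cont.neg.continuousWithinAt)
    (fun t _ => hasDerivAt_negphiD t)
    integrable_id_mul_phiD.integrableOn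
    (by simpa using tendsto_phiD.neg)
  simpa using this

lemma mills (x : ℝ) : x * QD x < phiD x := by
  have key : (0:ℝ) < ∫ t in Set.Ioi x, (t - x) * phiD t := by
    rw [setIntegral_pos_iff_support_of_nonneg_ae]
    · have : Function.support (fun t => (t - x) * phiD t) ∩ Set.Ioi x = Set.Ioi x := by
        rw [Set.inter_eq_right]
        intro t ht
        exact (mul_pos (by simpa using ht) (phiD_pos t)).ne'
      rw [this]; simp
    · filter_upwards [MeasureTheory.ae_restrict_mem measurableSet_Ioi] with t ht
      exact mul_nonneg (by simp at ht ⊢; linarith) (phiD_pos t).le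
    · apply MeasureTheory.Integrable.integrableOn
      have : (fun t => (t - x) * phiD t) = fun t => t * phiD t - x * phiD t := by
        funext t; ring
      rw [this]
      exact integrable_id_mul_phiD.sub (integrable_phiD.const_mul x)
  have hsub : ∫ t in Set.Ioi x, (t - x) * phiD t
      = (∫ t in Set.Ioi x, t * phiD t) - ∫ t in Set.Ioi x, x * phiD t := by
    rw [← MeasureTheory.integral_sub integrable_id_mul_phiD.integrableOn
      (integrable_phiD.integrableOn.const_mul x)]
    congr 1; funext t; ring
  rw [hsub, integral_tail, MeasureTheory.integral_const_mul] at key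
  have : QD x = ∫ t in Set.Ioi x, phiD t := rfl
  linarith [key, this ▸ key]

lemma mills' (x : ℝ) : x < phiD x / QD x := (lt_div_iff₀ (QD_pos x)).2 (mills x)

lemma key_ineq {u v : ℝ} (hu : 0 < u) (hv : 0 < v) :
    Real.exp (2 * u * v) * QD (u + v) < QD (u - v) := by
  set g : ℝ → ℝ := fun v => Real.log (QD (u - v)) - Real.log (QD (u + v)) - 2 * u * v with hg
  have hd : ∀ w : ℝ, HasDerivAt g
      (phiD (u - w) / QD (u - w) + phiD (u + w) / QD (u + w) - 2 * u) w := by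
    intro w
    have h1 : HasDerivAt (fun w : ℝ => QD (u - w)) (phiD (u - w)) w := by
      have inner : HasDerivAt (fun w : ℝ => u - w) (-1) w :=
        (hasDerivAt_id w).const_sub u |>.congr_deriv (by ring)
      have := (hasDerivAt_QD (u - w)).comp w inner
      simpa [Function.comp_def] using this
    have h2 : HasDerivAt (fun w : ℝ => QD (u + w)) (-phiD (u + w)) w := by
      have inner : HasDerivAt (fun w : ℝ => u + w) 1 w := (hasDerivAt_id w).const_add u
      have := (hasDerivAt_QD (u + w)).comp w inner
      simpa [Function.comp_def] using this
    have hl1 := h1.log (QD_pos (u - w)).ne'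
    have hl2 := h2.log (QD_pos (u + w)).ne'
    have hl3 : HasDerivAt (fun w : ℝ => 2 * u * w) (2 * u) w := by
      simpa using (hasDerivAt_id w).const_mul (2 * u)
    have := (hl1.sub hl2).sub hl3
    refine this.congr_deriv ?_
    ring
  have hmono : StrictMono g := by
    apply strictMono_of_deriv_pos
    intro w
    rw [(hd w).deriv]
    have m1 := mills' (u - w)
    have m2 := mills' (u + w)
    linarith
  have h0 : g 0 = 0 := by simp [hg]
  have hgv : 0 < g v := h0 ▸ hmono hv
  have : Real.log (Real.exp (2 * u * v) * QD (u + v)) < Real.log (QD (u - v)) := by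
    rw [Real.log_mul (Real.exp_pos _).ne' (QD_pos _).ne', Real.log_exp]
    simp only [hg] at hgv
    linarith
  exact (Real.log_lt_log_iff (mul_pos (Real.exp_pos _) (QD_pos _)) (QD_pos _)).1 this

theorem biasAmp_pos (p D : ℝ) (hp : 1/2 < p) (hp1 : p < 1) (hD : 0 < D) :
    0 < biasAmp p D := by
  have hq : 0 < 1 - p := by linarith
  have hL : 0 < Real.log (p / (1 - p)) := by
    apply Real.log_pos
    rw [lt_div_iff₀ hq]
    linarith
  set L := Real.log (p / (1 - p)) with hLdef
  set u := D / 2 with hu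
  set v := D⁻¹ * L with hv
  have hupos : 0 < u := by positivity
  have hvpos : 0 < v := by positivity
  have ha : -D⁻¹ * L + D / 2 = u - v := by rw [hu, hv]; ring
  have hb : -D⁻¹ * L - D / 2 = -(u + v) := by rw [hu, hv]; ring
  have h2uv : 2 * u * v = L := by
    rw [hu, hv]
    field_simp
  have hexp : Real.exp (2 * u * v) = p / (1 - p) := by
    rw [h2uv, hLdef, Real.exp_log (by positivity)]
  have key := key_ineq hupos hvpos
  rw [hexp] at key
  have hcdf1 : stdNormalCDF (u - v) = 1 - QD (u - v) := by
    have := cdf_add_QD (u - v); linarith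
  have hcdf2 : stdNormalCDF (-(u + v)) = QD (u + v) := cdf_symm (u + v)
  have hQ : p / (1 - p) * QD (u + v) < QD (u - v) := key
  have hQ' : p * QD (u + v) < (1 - p) * QD (u - v) := by
    rw [div_mul_eq_mul_div, div_lt_iff₀ hq] at hQ
    linarith [hQ]
  unfold biasAmp
  rw [ha, hb, hcdf1, hcdf2]
  ring_nf
  ring_nf at hQ'
  nlinarith [QD_pos (u + v), QD_pos (u - v)]
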